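/- arXiv:2205.14901 — 2 statements merged into one kernel-verified Lean document; each statement's English description precedes it below -/
import Mathlib

section
/- Let $0<\alpha<n$, $1<p<n/\alpha$, and $1/p - 1/q = \alpha/n$. If $\lambda_1, \lambda_2$ are weights in the class $A_{p,q}$ on $\mathbb{R}^n$ and $\nu = \lambda_1/\lambda_2$, then for every cube $Q \subset \mathbb{R}^n$ one has $\frac{1}{\nu(Q)} \leq C \, \frac{|Q|^{\alpha/n}}{\lambda_1^p(Q)^{1/p} \, \lambda_2^{-q'}(Q)^{1/q'}}$, where $C$ depends only on the $A_{p,q}$ characteristics of $\lambda_1,\lambda_2$ and on $n,p,q$. -/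
open MeasureTheory Metric

open Filter
open scoped ENNReal

private lemma memLp_of_int_rpow {X : Type*} [MeasurableSpace X] {μ : Measure X} {f : X → ℝ}
    {t : ℝ} (ht : 0 < t) (hf : AEStronglyMeasurable f μ) (h0 : 0 ≤ᵐ[μ] f)
    (hi : Integrable (fun x => f x ^ t) μ) : MemLp f (ENNReal.ofReal t) μ := by
  have hq0 : (ENNReal.ofReal t) ≠ 0 := by
    simpa [ENNReal.ofReal_eq_zero, not_le] using ht
  have hqt : (ENNReal.ofReal t) ≠ ∞ := ENNReal.ofReal_ne_top
  rw [← memLp_norm_rpow_iff (p := ENNReal.ofReal t) hf hq0 hqt,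
    ENNReal.div_self hq0 hqt, ENNReal.toReal_ofReal ht.le, memLp_one_iff_integrable]
  exact hi.congr (by filter_upwards [h0] with x hx; rw [Real.norm_of_nonneg hx])

private lemma holder_int {X : Type*} [MeasurableSpace X] {μ : Measure X} {f g : X → ℝ} {s t : ℝ}
    (hst : Real.HolderConjugate s t)
    (hfm : AEStronglyMeasurable f μ) (hgm : AEStronglyMeasurable g μ)
    (hf0 : 0 ≤ᵐ[μ] f) (hg0 : 0 ≤ᵐ[μ] g)
    (hfi : Integrable (fun x => f x ^ s) μ) (hgi : Integrable (fun x => g x ^ t) μ) :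
    ∫ x, f x * g x ∂μ ≤ (∫ x, f x ^ s ∂μ) ^ (1/s) * (∫ x, g x ^ t ∂μ) ^ (1/t) :=
  integral_mul_le_Lp_mul_Lq_of_nonneg hst hf0 hg0
    (memLp_of_int_rpow hst.pos hfm hf0 hfi) (memLp_of_int_rpow hst.symm.pos hgm hg0 hgi)

private lemma pow_mean_le {X : Type*} [MeasurableSpace X] {μ : Measure X} [IsFiniteMeasure μ]
    {f : X → ℝ} {s t : ℝ} (hs : 0 < s) (hst : s < t)
    (hfm : Measurable f) (hf0 : 0 ≤ᵐ[μ] f)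
    (hti : Integrable (fun x => f x ^ t) μ) :
    ∫ x, f x ^ s ∂μ ≤ (∫ x, f x ^ t ∂μ) ^ (s/t) * ((μ Set.univ).toReal) ^ (1 - s/t) := by
  have ht : 0 < t := hs.trans hst
  have hts : (0:ℝ) < t - s := sub_pos.2 hst
  have hconj : Real.HolderConjugate (t/s) (t/(t-s)) := by
    rw [Real.holderConjugate_iff]
    constructor
    · rw [lt_div_iff₀ hs]; linarith
    · rw [inv_div, inv_div]; field_simp; ring
  have hf0s : 0 ≤ᵐ[μ] fun x => f x ^ s := by
    filter_upwards [hf0] with x hx; exact Real.rpow_nonneg hx _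
  have heq : (fun x => (f x ^ s) ^ (t/s)) =ᵐ[μ] fun x => f x ^ t := by
    filter_upwards [hf0] with x hx
    rw [← Real.rpow_mul hx]
    congr 1; field_simp
  have hfi : Integrable (fun x => (f x ^ s) ^ (t/s)) μ := hti.congr heq.symm
  have h := holder_int (g := fun _ => (1:ℝ)) hconj
    ((hfm.pow measurable_const).aestronglyMeasurable)
    aestronglyMeasurable_const hf0s (Eventually.of_forall fun _ => zero_le_one) hfi
    (by simpa using (integrable_const (1:ℝ)))
  simp only [mul_one, Real.one_rpow] at h
  rw [integral_congr_ae heq, integral_const, measureReal_def, smul_eq_mul, mul_one] at h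
  have e1 : 1/(t/s) = s/t := one_div_div _ _
  have e2 : 1/(t/(t-s)) = 1 - s/t := by field_simp
  rwa [e1, e2] at h

private lemma int_pos' {X : Type*} [MeasurableSpace X] {μ : Measure X} {f : X → ℝ}
    (hμ : μ Set.univ ≠ 0) (h0 : ∀ᵐ x ∂μ, 0 < f x) (hi : Integrable f μ) :
    0 < ∫ x, f x ∂μ := by
  rw [integral_pos_iff_support_of_nonneg_ae (h0.mono fun x hx => hx.le) hi]
  have hcompl : μ (Function.support f)ᶜ = 0 := by
    refine measure_mono_null (fun x hx => ?_) (ae_iff.mp h0)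
    simp only [Function.mem_support, Set.mem_compl_iff, not_not] at hx
    simp [hx]
  have h1 : μ Set.univ ≤ μ (Function.support f) + μ (Function.support f)ᶜ := by
    rw [← Set.union_compl_self (Function.support f)]
    exact measure_union_le _ _
  rw [hcompl, add_zero] at h1
  exact pos_iff_ne_zero.mpr fun h => hμ (le_antisymm (by simpa [h] using h1) zero_le)

private lemma rpow_neg_le_aux {y s t : ℝ} (hy : 0 < y) (hs : 0 ≤ s) (hst : s ≤ t) :
    y ^ (-s) ≤ y ^ (-t) + 1 := by
  rcases le_total y 1 with h | h
  · exact le_add_of_le_of_nonneg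
      (Real.rpow_le_rpow_of_exponent_ge hy h (neg_le_neg hst)) zero_le_one
  · exact le_add_of_nonneg_of_le (Real.rpow_nonneg hy.le _)
      (Real.rpow_le_one_of_one_le_of_nonpos h (neg_nonpos.mpr hs))

private lemma rpow_div_le {X Y V θ σ r : ℝ} (hX : 0 ≤ X) (hY : 0 ≤ Y) (hV : 0 ≤ V)
    (hr : 0 < r) (h : X ≤ Y ^ θ * V ^ σ) : X ^ (1/r) ≤ Y ^ (θ/r) * V ^ (σ/r) := by
  have h1 : X ^ (1/r) ≤ (Y ^ θ * V ^ σ) ^ (1/r) :=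
    Real.rpow_le_rpow hX h (by positivity)
  rwa [Real.mul_rpow (by positivity) (by positivity), ← Real.rpow_mul hY, ← Real.rpow_mul hV,
    mul_one_div, mul_one_div] at h1

private lemma A_rearrange {V b c A s t : ℝ} (hV : 0 < V) (hb : 0 < b) (hc : 0 < c)
    (hs : 0 < s) (ht : 0 < t) (hA : (V⁻¹ * b) * ((V⁻¹ * c) ^ (s/t)) ≤ A) :
    b ^ (1/s) * c ^ (1/t) ≤ A ^ (1/s) * (V ^ (1/s) * V ^ (1/t)) := by
  have h1 : ((V⁻¹*b) * ((V⁻¹*c)^(s/t)))^(1/s) ≤ A^(1/s) :=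
    Real.rpow_le_rpow (by positivity) hA (by positivity)
  have h2 : ((V⁻¹*b) * ((V⁻¹*c)^(s/t)))^(1/s)
      = (V^(1/s))⁻¹ * b^(1/s) * ((V^(1/t))⁻¹ * c^(1/t)) := by
    rw [Real.mul_rpow (by positivity) (by positivity),
        ← Real.rpow_mul (by positivity),
        show s/t * (1/s) = 1/t by field_simp [hs.ne'],
        Real.mul_rpow (by positivity) hb.le, Real.mul_rpow (by positivity) hc.le,
        Real.inv_rpow hV.le, Real.inv_rpow hV.le]
  rw [h2] at h1
  have hVs : (0:ℝ) < V ^ (1/s) := Real.rpow_pos_of_pos hV _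
  have hVt : (0:ℝ) < V ^ (1/t) := Real.rpow_pos_of_pos hV _
  calc b^(1/s)*c^(1/t)
      = ((V^(1/s))⁻¹ * b^(1/s) * ((V^(1/t))⁻¹ * c^(1/t))) * (V^(1/s)*V^(1/t)) := by
        field_simp
    _ ≤ A^(1/s) * (V^(1/s)*V^(1/t)) := mul_le_mul_of_nonneg_right h1 (by positivity)

private lemma div_div_self_aux {s t : ℝ} (hs : s ≠ 0) : (s/t)/s = 1/t := by
  rw [div_div, mul_comm, ← div_div, div_self hs]

/-- For `0 < α < n`, `1 < p < n/α`, `1/p - 1/q = α/n`, weights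
`λ₁, λ₂ ∈ A_{p,q}` on `ℝⁿ` (cubes realized as closed balls for the sup metric on
`Fin n → ℝ`) and `ν = λ₁/λ₂`, there is a constant `C` (depending only on the
`A_{p,q}` characteristics and `n, p, q`) such that for every cube `Q`,
`ν(Q)⁻¹ ≤ C |Q|^{α/n} / (λ₁^p(Q)^{1/p} λ₂^{-q'}(Q)^{1/q'})`. -/
theorem statement0 (n : ℕ) (hn : 0 < n) (α p q : ℝ)
    (hα : 0 < α) (hαn : α < (n : ℝ)) (hp : 1 < p) (hpn : p < (n : ℝ) / α)
    (hpq : 1 / p - 1 / q = α / (n : ℝ))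
    (lam₁ lam₂ : (Fin n → ℝ) → ℝ)
    (hm₁ : Measurable lam₁) (hm₂ : Measurable lam₂)
    (hpos₁ : ∀ᵐ x ∂(volume : Measure (Fin n → ℝ)), 0 < lam₁ x)
    (hpos₂ : ∀ᵐ x ∂(volume : Measure (Fin n → ℝ)), 0 < lam₂ x)
    -- local integrability of the relevant powers (part of membership in `A_{p,q}`)
    (hint : ∀ (c : Fin n → ℝ) (r : ℝ), 0 < r →
      IntegrableOn (fun x => lam₁ x ^ p) (closedBall c r) volume ∧
      IntegrableOn (fun x => lam₁ x ^ q) (closedBall c r) volume ∧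
      IntegrableOn (fun x => lam₁ x ^ (-(p / (p - 1)))) (closedBall c r) volume ∧
      IntegrableOn (fun x => lam₂ x ^ q) (closedBall c r) volume ∧
      IntegrableOn (fun x => lam₂ x ^ (-(p / (p - 1)))) (closedBall c r) volume ∧
      IntegrableOn (fun x => lam₂ x ^ (-(q / (q - 1)))) (closedBall c r) volume ∧
      IntegrableOn (fun x => lam₁ x * (lam₂ x)⁻¹) (closedBall c r) volume)
    (A₁ A₂ : ℝ)
    -- `[λ₁]_{A_{p,q}} ≤ A₁`
    (hA₁ : ∀ (c : Fin n → ℝ) (r : ℝ), 0 < r →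
      (((volume (closedBall c r)).toReal)⁻¹ * ∫ x in closedBall c r, lam₁ x ^ q) *
        ((((volume (closedBall c r)).toReal)⁻¹ *
            ∫ x in closedBall c r, lam₁ x ^ (-(p / (p - 1)))) ^ (q / (p / (p - 1)))) ≤ A₁)
    -- `[λ₂]_{A_{p,q}} ≤ A₂`
    (hA₂ : ∀ (c : Fin n → ℝ) (r : ℝ), 0 < r →
      (((volume (closedBall c r)).toReal)⁻¹ * ∫ x in closedBall c r, lam₂ x ^ q) *
        ((((volume (closedBall c r)).toReal)⁻¹ *
            ∫ x in closedBall c r, lam₂ x ^ (-(p / (p - 1)))) ^ (q / (p / (p - 1)))) ≤ A₂) :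
    ∃ C : ℝ, 0 < C ∧ ∀ (c : Fin n → ℝ) (r : ℝ), 0 < r →
      (∫ x in closedBall c r, lam₁ x * (lam₂ x)⁻¹)⁻¹ ≤
        C * (volume (closedBall c r)).toReal ^ (α / (n : ℝ)) /
          ((∫ x in closedBall c r, lam₁ x ^ p) ^ (1 / p) *
            (∫ x in closedBall c r, lam₂ x ^ (-(q / (q - 1)))) ^ (1 / (q / (q - 1)))) := by
  have hn' : (0:ℝ) < n := by exact_mod_cast hn
  have hp0 : (0:ℝ) < p := lt_trans one_pos hp
  have hαn1 : α / n < 1/p := by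
    rw [div_lt_div_iff₀ hn' hp0]
    have := (lt_div_iff₀ hα).mp hpn
    linarith
  have hαnpos : 0 < α / (n:ℝ) := div_pos hα hn'
  have hqinv : 0 < 1/q := by linarith
  have hq0 : (0:ℝ) < q := by
    rcases lt_trichotomy q 0 with h | h | h
    · exfalso; have : 1/q < 0 := div_neg_of_pos_of_neg one_pos h; linarith
    · exfalso; rw [h] at hqinv; simp at hqinv
    · exact h
  have hpltq : p < q := by
    have h1 : (1:ℝ)/q < 1/p := by linarith
    rw [div_lt_div_iff₀ hq0 hp0] at h1
    linarith
  have hq : 1 < q := lt_trans hp hpltq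
  have hpm : (0:ℝ) < p - 1 := by linarith
  have hqm : (0:ℝ) < q - 1 := by linarith
  have hP1 : 1 < p/(p-1) := (one_lt_div hpm).mpr (by linarith)
  have hQ1 : 1 < q/(q-1) := (one_lt_div hqm).mpr (by linarith)
  have hPpos : (0:ℝ) < p/(p-1) := lt_trans one_pos hP1
  have hQpos : (0:ℝ) < q/(q-1) := lt_trans one_pos hQ1
  have hQP : q/(q-1) < p/(p-1) := by
    rw [div_lt_div_iff₀ hqm hpm]; nlinarith
  have conjq : Real.HolderConjugate q (q/(q-1)) := by
    rw [Real.holderConjugate_iff]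
    constructor
    · exact hq
    · rw [inv_div]; field_simp; ring
  have conj2 : Real.HolderConjugate 2 2 := by rw [Real.holderConjugate_iff]; constructor <;> norm_num
  have hα2 : 1/(q/(q-1)) - 1/(p/(p-1)) = α/(n:ℝ) := by
    rw [one_div_div, one_div_div, ← hpq]; field_simp; ring
  have hsum : 1/q + 1/(p/(p-1)) = 1 - α/(n:ℝ) := by
    rw [one_div_div, ← hpq]; field_simp; ring
  have hB₁ : (0:ℝ) < max A₁ 1 := lt_max_of_lt_right one_pos
  have hB₂ : (0:ℝ) < max A₂ 1 := lt_max_of_lt_right one_pos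
  have hC : (0:ℝ) < (max A₁ 1)^(1/q) * (max A₂ 1)^(1/q) :=
    mul_pos (Real.rpow_pos_of_pos hB₁ _) (Real.rpow_pos_of_pos hB₂ _)
  refine ⟨(max A₁ 1)^(1/q) * (max A₂ 1)^(1/q), hC, fun c r hr => ?_⟩
  obtain ⟨i1p, i1q, i1mp, i2q, i2mp, i2mq, iν⟩ := hint c r hr
  have hK1 := (hA₁ c r hr).trans (le_max_left A₁ 1)
  have hK2 := (hA₂ c r hr).trans (le_max_left A₂ 1)
  set μ := (volume : Measure (Fin n → ℝ)).restrict (closedBall c r) with hμdef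
  set V := ((volume : Measure (Fin n → ℝ)) (closedBall c r)).toReal with hVdef
  haveI : IsFiniteMeasure μ := by
    rw [hμdef]
    exact ⟨by rw [Measure.restrict_apply_univ]; exact measure_closedBall_lt_top⟩
  have hvol0 : (volume : Measure (Fin n → ℝ)) (closedBall c r) ≠ 0 :=
    (measure_closedBall_pos volume c hr).ne'
  have hV : 0 < V := by
    rw [hVdef]; exact ENNReal.toReal_pos hvol0 measure_closedBall_lt_top.ne
  have hμ0 : μ Set.univ ≠ 0 := by
    rw [hμdef, Measure.restrict_apply_univ]; exact hvol0
  have hVeq : (μ Set.univ).toReal = V := by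
    rw [hμdef, Measure.restrict_apply_univ, hVdef]
  have hae₁ : ∀ᵐ x ∂μ, 0 < lam₁ x := by rw [hμdef]; exact ae_restrict_of_ae hpos₁
  have hae₂ : ∀ᵐ x ∂μ, 0 < lam₂ x := by rw [hμdef]; exact ae_restrict_of_ae hpos₂
  have j1p : Integrable (fun x => lam₁ x ^ p) μ := by rw [hμdef]; exact i1p
  have j1q : Integrable (fun x => lam₁ x ^ q) μ := by rw [hμdef]; exact i1q
  have j1mp : Integrable (fun x => lam₁ x ^ (-(p/(p-1)))) μ := by rw [hμdef]; exact i1mp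
  have j2q : Integrable (fun x => lam₂ x ^ q) μ := by rw [hμdef]; exact i2q
  have j2mp : Integrable (fun x => lam₂ x ^ (-(p/(p-1)))) μ := by rw [hμdef]; exact i2mp
  have j2mq : Integrable (fun x => lam₂ x ^ (-(q/(q-1)))) μ := by rw [hμdef]; exact i2mq
  have jν : Integrable (fun x => lam₁ x * (lam₂ x)⁻¹) μ := by rw [hμdef]; exact iν
  have j1mq : Integrable (fun x => lam₁ x ^ (-(q/(q-1)))) μ := by
    refine (Integrable.add j1mp (integrable_const 1)).mono'
      ((hm₁.pow measurable_const).aestronglyMeasurable) ?_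
    filter_upwards [hae₁] with x hx
    rw [Real.norm_of_nonneg (Real.rpow_nonneg hx.le _)]
    exact rpow_neg_le_aux hx hQpos.le hQP.le
  have jw : Integrable (fun x => lam₂ x * (lam₁ x)⁻¹) μ := by
    refine (Integrable.add j2q j1mq).mono' ((hm₂.mul hm₁.inv).aestronglyMeasurable) ?_
    filter_upwards [hae₁, hae₂] with x h1 h2
    have hb : (0:ℝ) ≤ lam₂ x * (lam₁ x)⁻¹ := by positivity
    rw [Real.norm_of_nonneg hb]
    have e : ((lam₁ x)⁻¹)^(q/(q-1)) = lam₁ x ^ (-(q/(q-1))) := by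
      rw [Real.inv_rpow h1.le, ← Real.rpow_neg h1.le]
    calc lam₂ x * (lam₁ x)⁻¹
        ≤ (lam₂ x)^q / q + ((lam₁ x)⁻¹)^(q/(q-1)) / (q/(q-1)) :=
          Real.young_inequality_of_nonneg h2.le (by positivity) conjq
      _ ≤ (lam₂ x)^q + lam₁ x ^ (-(q/(q-1))) := by
          rw [e]
          exact add_le_add (div_le_self (Real.rpow_nonneg h2.le _) hq.le)
            (div_le_self (Real.rpow_nonneg (by positivity) _) hQ1.le)
  have hinv₁ : ∀ t : ℝ, (fun x => ((lam₁ x)⁻¹) ^ t) =ᵐ[μ] fun x => lam₁ x ^ (-t) := fun t => by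
    filter_upwards [hae₁] with x hx
    rw [Real.inv_rpow hx.le, ← Real.rpow_neg hx.le]
  have hinv₂ : ∀ t : ℝ, (fun x => ((lam₂ x)⁻¹) ^ t) =ᵐ[μ] fun x => lam₂ x ^ (-t) := fun t => by
    filter_upwards [hae₂] with x hx
    rw [Real.inv_rpow hx.le, ← Real.rpow_neg hx.le]
  have hIa : 0 < ∫ x, lam₁ x ^ p ∂μ :=
    int_pos' hμ0 (by filter_upwards [hae₁] with x hx; exact Real.rpow_pos_of_pos hx _) j1p
  have hIb : 0 < ∫ x, lam₁ x ^ q ∂μ :=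
    int_pos' hμ0 (by filter_upwards [hae₁] with x hx; exact Real.rpow_pos_of_pos hx _) j1q
  have hIc : 0 < ∫ x, lam₁ x ^ (-(p/(p-1))) ∂μ :=
    int_pos' hμ0 (by filter_upwards [hae₁] with x hx; exact Real.rpow_pos_of_pos hx _) j1mp
  have hId : 0 < ∫ x, lam₂ x ^ q ∂μ :=
    int_pos' hμ0 (by filter_upwards [hae₂] with x hx; exact Real.rpow_pos_of_pos hx _) j2q
  have hIe : 0 < ∫ x, lam₂ x ^ (-(q/(q-1))) ∂μ :=
    int_pos' hμ0 (by filter_upwards [hae₂] with x hx; exact Real.rpow_pos_of_pos hx _) j2mq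
  have hIe' : 0 < ∫ x, lam₂ x ^ (-(p/(p-1))) ∂μ :=
    int_pos' hμ0 (by filter_upwards [hae₂] with x hx; exact Real.rpow_pos_of_pos hx _) j2mp
  have hIu : 0 < ∫ x, lam₁ x ^ (-(q/(q-1))) ∂μ :=
    int_pos' hμ0 (by filter_upwards [hae₁] with x hx; exact Real.rpow_pos_of_pos hx _) j1mq
  have hIν : 0 < ∫ x, lam₁ x * (lam₂ x)⁻¹ ∂μ :=
    int_pos' hμ0 (by filter_upwards [hae₁, hae₂] with x h1 h2; positivity) jν
  have hIw : 0 < ∫ x, lam₂ x * (lam₁ x)⁻¹ ∂μ :=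
    int_pos' hμ0 (by filter_upwards [hae₁, hae₂] with x h1 h2; positivity) jw
  -- power-mean estimates
  have t1 : (∫ x, lam₁ x ^ p ∂μ) ^ (1/p)
      ≤ (∫ x, lam₁ x ^ q ∂μ) ^ (1/q) * V ^ (α/(n:ℝ)) := by
    have h := pow_mean_le hp0 hpltq hm₁ (hae₁.mono fun x hx => hx.le) j1q
    rw [hVeq] at h
    have h2 := rpow_div_le hIa.le hIb.le hV.le hp0 h
    rwa [show (p/q)/p = 1/q from div_div_self_aux hp0.ne',
      show (1-p/q)/p = α/(n:ℝ) by
        rw [← hpq, sub_div, div_div_self_aux hp0.ne']] at h2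
  have t2 : (∫ x, lam₂ x ^ (-(q/(q-1))) ∂μ) ^ (1/(q/(q-1)))
      ≤ (∫ x, lam₂ x ^ (-(p/(p-1))) ∂μ) ^ (1/(p/(p-1))) * V ^ (α/(n:ℝ)) := by
    have h := pow_mean_le hQpos hQP (show Measurable fun x => (lam₂ x)⁻¹ from hm₂.inv)
      (hae₂.mono fun x hx => le_of_lt (by positivity))
      (j2mp.congr (hinv₂ (p/(p-1))).symm)
    rw [hVeq, integral_congr_ae (hinv₂ (q/(q-1))), integral_congr_ae (hinv₂ (p/(p-1)))] at h
    have h2 := rpow_div_le hIe.le hIe'.le hV.le hQpos h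
    rwa [show ((q/(q-1))/(p/(p-1)))/(q/(q-1)) = 1/(p/(p-1)) from div_div_self_aux hQpos.ne',
      show (1-(q/(q-1))/(p/(p-1)))/(q/(q-1)) = α/(n:ℝ) by
        rw [sub_div, div_div_self_aux hQpos.ne']; exact hα2] at h2
  have t3u : (∫ x, lam₁ x ^ (-(q/(q-1))) ∂μ) ^ (1/(q/(q-1)))
      ≤ (∫ x, lam₁ x ^ (-(p/(p-1))) ∂μ) ^ (1/(p/(p-1))) * V ^ (α/(n:ℝ)) := by
    have h := pow_mean_le hQpos hQP (show Measurable fun x => (lam₁ x)⁻¹ from hm₁.inv)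
      (hae₁.mono fun x hx => le_of_lt (by positivity))
      (j1mp.congr (hinv₁ (p/(p-1))).symm)
    rw [hVeq, integral_congr_ae (hinv₁ (q/(q-1))), integral_congr_ae (hinv₁ (p/(p-1)))] at h
    have h2 := rpow_div_le hIu.le hIc.le hV.le hQpos h
    rwa [show ((q/(q-1))/(p/(p-1)))/(q/(q-1)) = 1/(p/(p-1)) from div_div_self_aux hQpos.ne',
      show (1-(q/(q-1))/(p/(p-1)))/(q/(q-1)) = α/(n:ℝ) by
        rw [sub_div, div_div_self_aux hQpos.ne']; exact hα2] at h2
  -- Hölder for w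
  have Kw : (∫ x, lam₂ x * (lam₁ x)⁻¹ ∂μ)
      ≤ (∫ x, lam₂ x ^ q ∂μ) ^ (1/q) * (∫ x, lam₁ x ^ (-(q/(q-1))) ∂μ) ^ (1/(q/(q-1))) := by
    have h := holder_int conjq hm₂.aestronglyMeasurable (show Measurable fun x => (lam₁ x)⁻¹ from hm₁.inv).aestronglyMeasurable
      (hae₂.mono fun x hx => hx.le) (hae₁.mono fun x hx => le_of_lt (by positivity))
      j2q (j1mq.congr (hinv₁ (q/(q-1))).symm)
    rwa [integral_congr_ae (hinv₁ (q/(q-1)))] at h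
  -- Cauchy–Schwarz: V * V ≤ ν * w
  have KV : V * V ≤ (∫ x, lam₁ x * (lam₂ x)⁻¹ ∂μ) * (∫ x, lam₂ x * (lam₁ x)⁻¹ ∂μ) := by
    have hfm : Measurable fun x => (lam₁ x * (lam₂ x)⁻¹) ^ ((1:ℝ)/2) :=
      (hm₁.mul hm₂.inv).pow measurable_const
    have hgm : Measurable fun x => (lam₂ x * (lam₁ x)⁻¹) ^ ((1:ℝ)/2) :=
      (hm₂.mul hm₁.inv).pow measurable_const
    have hfae : (fun x => ((lam₁ x * (lam₂ x)⁻¹) ^ ((1:ℝ)/2)) ^ (2:ℝ))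
        =ᵐ[μ] fun x => lam₁ x * (lam₂ x)⁻¹ := by
      filter_upwards [hae₁, hae₂] with x h1 h2
      have hy : (0:ℝ) ≤ lam₁ x * (lam₂ x)⁻¹ := by positivity
      rw [← Real.rpow_mul hy]; norm_num
    have hgae : (fun x => ((lam₂ x * (lam₁ x)⁻¹) ^ ((1:ℝ)/2)) ^ (2:ℝ))
        =ᵐ[μ] fun x => lam₂ x * (lam₁ x)⁻¹ := by
      filter_upwards [hae₁, hae₂] with x h1 h2
      have hy : (0:ℝ) ≤ lam₂ x * (lam₁ x)⁻¹ := by positivity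
      rw [← Real.rpow_mul hy]; norm_num
    have h := holder_int conj2 hfm.aestronglyMeasurable hgm.aestronglyMeasurable
      (by filter_upwards [hae₁, hae₂] with x h1 h2
          exact Real.rpow_nonneg (by positivity) _)
      (by filter_upwards [hae₁, hae₂] with x h1 h2
          exact Real.rpow_nonneg (by positivity) _)
      (jν.congr hfae.symm) (jw.congr hgae.symm)
    have hfg : (fun x => (lam₁ x * (lam₂ x)⁻¹) ^ ((1:ℝ)/2) * (lam₂ x * (lam₁ x)⁻¹) ^ ((1:ℝ)/2))
        =ᵐ[μ] fun _ => (1:ℝ) := by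
      filter_upwards [hae₁, hae₂] with x h1 h2
      rw [← Real.mul_rpow (by positivity) (by positivity),
        show (lam₁ x * (lam₂ x)⁻¹) * (lam₂ x * (lam₁ x)⁻¹) = 1 by field_simp,
        Real.one_rpow]
    rw [integral_congr_ae hfg, integral_const, measureReal_def, smul_eq_mul, mul_one, hVeq,
      integral_congr_ae hfae, integral_congr_ae hgae] at h
    calc V * V
        ≤ ((∫ x, lam₁ x * (lam₂ x)⁻¹ ∂μ)^(1/(2:ℝ)) * (∫ x, lam₂ x * (lam₁ x)⁻¹ ∂μ)^(1/(2:ℝ))) *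
          ((∫ x, lam₁ x * (lam₂ x)⁻¹ ∂μ)^(1/(2:ℝ)) * (∫ x, lam₂ x * (lam₁ x)⁻¹ ∂μ)^(1/(2:ℝ))) :=
          mul_le_mul h h hV.le
            (mul_nonneg (Real.rpow_nonneg hIν.le _) (Real.rpow_nonneg hIw.le _))
      _ = ((∫ x, lam₁ x * (lam₂ x)⁻¹ ∂μ)^(1/(2:ℝ)) * (∫ x, lam₁ x * (lam₂ x)⁻¹ ∂μ)^(1/(2:ℝ))) *
          ((∫ x, lam₂ x * (lam₁ x)⁻¹ ∂μ)^(1/(2:ℝ)) * (∫ x, lam₂ x * (lam₁ x)⁻¹ ∂μ)^(1/(2:ℝ))) := by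
          ring
      _ = (∫ x, lam₁ x * (lam₂ x)⁻¹ ∂μ) * (∫ x, lam₂ x * (lam₁ x)⁻¹ ∂μ) := by
          rw [← Real.rpow_add hIν, ← Real.rpow_add hIw]
          norm_num
  -- final assembly
  have K1 := A_rearrange hV hIb hIc hq0 hPpos hK1
  have K2 := A_rearrange hV hId hIe' hq0 hPpos hK2
  have t3 : (∫ x, lam₂ x * (lam₁ x)⁻¹ ∂μ)
      ≤ (∫ x, lam₂ x ^ q ∂μ)^(1/q) *
        ((∫ x, lam₁ x ^ (-(p/(p-1))) ∂μ)^(1/(p/(p-1))) * V^(α/(n:ℝ))) :=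
    Kw.trans (mul_le_mul_of_nonneg_left t3u (Real.rpow_nonneg hId.le _))
  have hVV : V * V = V ^ (2:ℝ) := by
    rw [show (2:ℝ) = ((2:ℕ):ℝ) from by norm_num, Real.rpow_natCast]; ring
  have hVcollapse : (V^(1/q)*V^(1/(p/(p-1)))) * (V^(1/q)*V^(1/(p/(p-1)))) *
      (V^(α/(n:ℝ))*V^(α/(n:ℝ))*V^(α/(n:ℝ))) = V^(α/(n:ℝ)) * (V*V) := by
    rw [hVV]
    simp only [← Real.rpow_add hV]
    congr 1
    linarith [hsum]
  rw [le_div_iff₀ (mul_pos (Real.rpow_pos_of_pos hIa _) (Real.rpow_pos_of_pos hIe _)),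
    inv_mul_le_iff₀ hIν]
  have main : (∫ x, lam₁ x ^ p ∂μ)^(1/p) * (∫ x, lam₂ x ^ (-(q/(q-1))) ∂μ)^(1/(q/(q-1))) *
        (∫ x, lam₂ x * (lam₁ x)⁻¹ ∂μ)
      ≤ ((∫ x, lam₁ x * (lam₂ x)⁻¹ ∂μ) *
          ((max A₁ 1)^(1/q) * (max A₂ 1)^(1/q) * V^(α/(n:ℝ)))) *
        (∫ x, lam₂ x * (lam₁ x)⁻¹ ∂μ) := by
    calc (∫ x, lam₁ x ^ p ∂μ)^(1/p) * (∫ x, lam₂ x ^ (-(q/(q-1))) ∂μ)^(1/(q/(q-1))) *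
          (∫ x, lam₂ x * (lam₁ x)⁻¹ ∂μ)
        ≤ (((∫ x, lam₁ x ^ q ∂μ)^(1/q) * V^(α/(n:ℝ))) *
            ((∫ x, lam₂ x ^ (-(p/(p-1))) ∂μ)^(1/(p/(p-1))) * V^(α/(n:ℝ)))) *
          ((∫ x, lam₂ x ^ q ∂μ)^(1/q) *
            ((∫ x, lam₁ x ^ (-(p/(p-1))) ∂μ)^(1/(p/(p-1))) * V^(α/(n:ℝ)))) := by
          refine mul_le_mul (mul_le_mul t1 t2 (Real.rpow_nonneg hIe.le _) ?_) t3 hIw.le ?_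
          · exact mul_nonneg (Real.rpow_nonneg hIb.le _) (Real.rpow_nonneg hV.le _)
          · exact mul_nonneg
              (mul_nonneg (Real.rpow_nonneg hIb.le _) (Real.rpow_nonneg hV.le _))
              (mul_nonneg (Real.rpow_nonneg hIe'.le _) (Real.rpow_nonneg hV.le _))
      _ = ((∫ x, lam₁ x ^ q ∂μ)^(1/q) * (∫ x, lam₁ x ^ (-(p/(p-1))) ∂μ)^(1/(p/(p-1)))) *
            ((∫ x, lam₂ x ^ q ∂μ)^(1/q) * (∫ x, lam₂ x ^ (-(p/(p-1))) ∂μ)^(1/(p/(p-1)))) *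
            (V^(α/(n:ℝ))*V^(α/(n:ℝ))*V^(α/(n:ℝ))) := by ring
      _ ≤ ((max A₁ 1)^(1/q) * (V^(1/q)*V^(1/(p/(p-1))))) *
            ((max A₂ 1)^(1/q) * (V^(1/q)*V^(1/(p/(p-1))))) *
            (V^(α/(n:ℝ))*V^(α/(n:ℝ))*V^(α/(n:ℝ))) := by
          refine mul_le_mul_of_nonneg_right (mul_le_mul K1 K2 ?_ ?_) ?_
          · exact mul_nonneg (Real.rpow_nonneg hId.le _) (Real.rpow_nonneg hIe'.le _)
          · exact mul_nonneg (Real.rpow_nonneg hB₁.le _)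
              (mul_nonneg (Real.rpow_nonneg hV.le _) (Real.rpow_nonneg hV.le _))
          · exact mul_nonneg
              (mul_nonneg (Real.rpow_nonneg hV.le _) (Real.rpow_nonneg hV.le _))
              (Real.rpow_nonneg hV.le _)
      _ = ((max A₁ 1)^(1/q) * (max A₂ 1)^(1/q)) *
            ((V^(1/q)*V^(1/(p/(p-1)))) * (V^(1/q)*V^(1/(p/(p-1)))) *
              (V^(α/(n:ℝ))*V^(α/(n:ℝ))*V^(α/(n:ℝ)))) := by ring
      _ = ((max A₁ 1)^(1/q) * (max A₂ 1)^(1/q)) * (V^(α/(n:ℝ)) * (V*V)) := by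
          rw [hVcollapse]
      _ ≤ ((max A₁ 1)^(1/q) * (max A₂ 1)^(1/q)) * (V^(α/(n:ℝ)) *
            ((∫ x, lam₁ x * (lam₂ x)⁻¹ ∂μ) * (∫ x, lam₂ x * (lam₁ x)⁻¹ ∂μ))) :=
          mul_le_mul_of_nonneg_left
            (mul_le_mul_of_nonneg_left KV (Real.rpow_nonneg hV.le _)) hC.le
      _ = ((∫ x, lam₁ x * (lam₂ x)⁻¹ ∂μ) *
            ((max A₁ 1)^(1/q) * (max A₂ 1)^(1/q) * V^(α/(n:ℝ)))) *
          (∫ x, lam₂ x * (lam₁ x)⁻¹ ∂μ) := by ring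
  exact le_of_mul_le_mul_right main hIw
end

section
/- Let $0 < \alpha < n$, $1 < p < n/\alpha$, $1/p - 1/q = \alpha/n$, and $\lambda_1, \lambda_2 \in A_{p,q}$. Then $\nu := \lambda_1 \lambda_2^{-1}$ belongs to the Muckenhoupt class $A_2$. -/
open MeasureTheory Metric

/-- From integrability of `‖f‖ ^ t` deduce `Memℒp f (ofReal t)`. -/
private lemma memLp_of_integrable_rpow {X : Type*} [MeasurableSpace X] {μ : Measure X}
    {f : X → ℝ} (hf : AEStronglyMeasurable f μ) {t : ℝ} (ht : 0 < t)
    (h : Integrable (fun x => ‖f x‖ ^ t) μ) : MemLp f (ENNReal.ofReal t) μ := by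
  have h0 : (ENNReal.ofReal t) ≠ 0 := by
    simp [ENNReal.ofReal_eq_zero, not_le, ht]
  have htop : (ENNReal.ofReal t) ≠ ⊤ := ENNReal.ofReal_ne_top
  have key := memLp_norm_rpow_iff (p := ENNReal.ofReal t) hf h0 htop
  rw [ENNReal.div_self h0 htop, ENNReal.toReal_ofReal ht.le] at key
  exact key.1 (memLp_one_iff_integrable.2 h)

/-- Double-Hölder helper: for positive `f, g` on a finite measure space with
`f^q` and `g^(-s)` integrable, `q/(q-1) < s`, one has
`∫ f g⁻¹ ≤ (∫ f^q)^(1/q) (∫ g^(-s))^(1/s) μ(univ)^(1/q' - 1/s)`. -/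
private lemma holder_pair {X : Type*} [MeasurableSpace X] (μ : Measure X) [IsFiniteMeasure μ]
    {f g : X → ℝ} (hf : Measurable f) (hg : Measurable g)
    (hfpos : ∀ᵐ x ∂μ, 0 < f x) (hgpos : ∀ᵐ x ∂μ, 0 < g x)
    {q s : ℝ} (hq : 1 < q) (hs : 1 < s) (hqs : q / (q - 1) < s)
    (hfint : Integrable (fun x => f x ^ q) μ)
    (hgint : Integrable (fun x => g x ^ (-s)) μ) :
    ∫ x, f x * (g x)⁻¹ ∂μ ≤
      (∫ x, f x ^ q ∂μ) ^ (1 / q) * (∫ x, g x ^ (-s) ∂μ) ^ (1 / s) *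
        (μ Set.univ).toReal ^ (1 / (q / (q - 1)) - 1 / s) := by
  have hq0 : 0 < q := lt_trans one_pos hq
  have hq1 : 0 < q - 1 := by linarith
  set q' : ℝ := q / (q - 1) with hq'def
  have hq'pos : 0 < q' := div_pos hq0 hq1
  have hq'1 : 1 < q' := by
    rw [hq'def, lt_div_iff₀ hq1]; linarith
  have hcon : q.HolderConjugate q' := (Real.holderConjugate_iff_eq_conjExponent hq).2 rfl
  have hs0 : 0 < s := lt_trans one_pos hs
  set V : ℝ := (μ Set.univ).toReal with hVdef
  have hVnn : 0 ≤ V := ENNReal.toReal_nonneg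
  -- integrability of g ^ (-q')
  have hgq'meas : Measurable fun x => g x ^ (-q') := by fun_prop
  have hgq' : Integrable (fun x => g x ^ (-q')) μ := by
    refine Integrable.mono' (hgint.add (integrable_const 1)) hgq'meas.aestronglyMeasurable ?_
    filter_upwards [hgpos] with x hx
    simp only [Pi.add_apply]
    rw [Real.norm_eq_abs, abs_of_nonneg (Real.rpow_nonneg hx.le _)]
    rcases le_total (g x) 1 with h1 | h1
    · have h2 : g x ^ (-q') ≤ g x ^ (-s) :=
        Real.rpow_le_rpow_of_exponent_ge hx h1 (by linarith)
      linarith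
    · have h2 : g x ^ (-q') ≤ g x ^ (0:ℝ) :=
        Real.rpow_le_rpow_of_exponent_le h1 (by linarith)
      have h3 : (0:ℝ) ≤ g x ^ (-s) := Real.rpow_nonneg (by linarith) _
      rw [Real.rpow_zero] at h2
      linarith
  -- Memℒp facts
  have hmemf : MemLp f (ENNReal.ofReal q) μ := by
    refine memLp_of_integrable_rpow hf.aestronglyMeasurable hq0 (hfint.congr ?_)
    filter_upwards [hfpos] with x hx
    rw [Real.norm_eq_abs, abs_of_nonneg hx.le]
  have hmemg : MemLp (fun x => (g x)⁻¹) (ENNReal.ofReal q') μ := by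
    refine memLp_of_integrable_rpow hg.inv.aestronglyMeasurable hq'pos (hgq'.congr ?_)
    filter_upwards [hgpos] with x hx
    rw [Pi.inv_apply, Real.norm_eq_abs, abs_of_nonneg (inv_nonneg.2 hx.le), Real.inv_rpow hx.le,
      ← Real.rpow_neg hx.le]
  -- first Hölder
  have hH1 : ∫ x, f x * (g x)⁻¹ ∂μ ≤
      (∫ x, f x ^ q ∂μ) ^ (1 / q) * (∫ x, (g x)⁻¹ ^ q' ∂μ) ^ (1 / q') := by
    refine MeasureTheory.integral_mul_le_Lp_mul_Lq_of_nonneg hcon ?_ ?_ hmemf hmemg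
    · filter_upwards [hfpos] with x hx; exact hx.le
    · filter_upwards [hgpos] with x hx; exact inv_nonneg.2 hx.le
  have hrw1 : ∫ x, (g x)⁻¹ ^ q' ∂μ = ∫ x, g x ^ (-q') ∂μ := by
    refine integral_congr_ae ?_
    filter_upwards [hgpos] with x hx
    rw [Real.inv_rpow hx.le, ← Real.rpow_neg hx.le]
  rw [hrw1] at hH1
  -- second Hölder: exponent a = s / q'
  set a : ℝ := s / q' with hadef
  have ha1 : 1 < a := (one_lt_div hq'pos).2 hqs
  have ha0 : 0 < a := lt_trans one_pos ha1
  have hq'ne : q' ≠ 0 := ne_of_gt hq'pos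
  have hexp : -q' * a = -s := by rw [hadef]; field_simp
  have hacon : a.HolderConjugate (a / (a - 1)) :=
    (Real.holderConjugate_iff_eq_conjExponent ha1).2 rfl
  have hb0 : 0 < a / (a - 1) := div_pos ha0 (by linarith)
  have heq2 : ∀ᵐ x ∂μ, g x ^ (-s) = ‖g x ^ (-q')‖ ^ a := by
    filter_upwards [hgpos] with x hx
    rw [Real.norm_eq_abs, abs_of_nonneg (Real.rpow_nonneg hx.le _),
      ← Real.rpow_mul hx.le, hexp]
  have hmem2 : MemLp (fun x => g x ^ (-q')) (ENNReal.ofReal a) μ :=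
    memLp_of_integrable_rpow hgq'meas.aestronglyMeasurable ha0 (hgint.congr heq2)
  have hmem1 : MemLp (fun _ : X => (1:ℝ)) (ENNReal.ofReal (a / (a - 1))) μ := memLp_const 1
  have hH2 : ∫ x, g x ^ (-q') * (1:ℝ) ∂μ ≤
      (∫ x, (g x ^ (-q')) ^ a ∂μ) ^ (1 / a) *
        (∫ x, (1:ℝ) ^ (a / (a - 1)) ∂μ) ^ (1 / (a / (a - 1))) := by
    refine MeasureTheory.integral_mul_le_Lp_mul_Lq_of_nonneg hacon ?_ ?_ hmem2 hmem1
    · filter_upwards [hgpos] with x hx; exact Real.rpow_nonneg hx.le _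
    · filter_upwards with x; exact zero_le_one
  have hrw2 : ∫ x, (g x ^ (-q')) ^ a ∂μ = ∫ x, g x ^ (-s) ∂μ := by
    refine integral_congr_ae ?_
    filter_upwards [hgpos] with x hx
    rw [← Real.rpow_mul hx.le, hexp]
  have hrw3 : ∫ x, (1:ℝ) ^ (a / (a - 1)) ∂μ = V := by
    simp [Real.one_rpow, hVdef, measureReal_def]
  simp only [mul_one] at hH2
  rw [hrw2, hrw3] at hH2
  -- raise hH2 to power 1/q'
  have hIs : 0 ≤ ∫ x, g x ^ (-s) ∂μ := by
    refine integral_nonneg_of_ae ?_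
    filter_upwards [hgpos] with x hx; exact Real.rpow_nonneg hx.le _
  have hJ : 0 ≤ ∫ x, g x ^ (-q') ∂μ := by
    refine integral_nonneg_of_ae ?_
    filter_upwards [hgpos] with x hx; exact Real.rpow_nonneg hx.le _
  have hIq : 0 ≤ ∫ x, f x ^ q ∂μ := by
    refine integral_nonneg_of_ae ?_
    filter_upwards [hfpos] with x hx; exact Real.rpow_nonneg hx.le _
  have hH3 : (∫ x, g x ^ (-q') ∂μ) ^ (1 / q') ≤
      (∫ x, g x ^ (-s) ∂μ) ^ (1 / s) * V ^ (1 / q' - 1 / s) := by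
    have h1 := Real.rpow_le_rpow hJ hH2 (le_of_lt (one_div_pos.2 hq'pos))
    have e1 : ((∫ x, g x ^ (-s) ∂μ) ^ (1 / a) * V ^ (1 / (a / (a - 1)))) ^ (1 / q') =
        (∫ x, g x ^ (-s) ∂μ) ^ (1 / s) * V ^ (1 / q' - 1 / s) := by
      rw [Real.mul_rpow (Real.rpow_nonneg hIs _) (Real.rpow_nonneg hVnn _),
        ← Real.rpow_mul hIs, ← Real.rpow_mul hVnn]
      congr 1
      · congr 1
        rw [div_mul_div_comm, one_mul, hadef, div_mul_cancel₀ _ hq'ne]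
      · congr 1
        have hsne : s ≠ 0 := ne_of_gt hs0
        have hane : a - 1 ≠ 0 := by
          intro h; rw [sub_eq_zero] at h; rw [← h] at ha1; exact lt_irrefl _ ha1
        have hane' : a ≠ 0 := ne_of_gt ha0
        have h2 : 1 / (a / (a - 1)) = 1 - 1 / a := by field_simp
        rw [h2, hadef, one_div_div, sub_mul, one_mul]
        congr 1
        rw [div_mul_div_comm, mul_one, mul_comm s q', div_mul_cancel_left₀ hq'ne, one_div]
    rw [e1] at h1
    exact h1
  calc ∫ x, f x * (g x)⁻¹ ∂μ
      ≤ (∫ x, f x ^ q ∂μ) ^ (1 / q) * (∫ x, g x ^ (-q') ∂μ) ^ (1 / q') := hH1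
    _ ≤ (∫ x, f x ^ q ∂μ) ^ (1 / q) *
          ((∫ x, g x ^ (-s) ∂μ) ^ (1 / s) * V ^ (1 / q' - 1 / s)) :=
        mul_le_mul_of_nonneg_left hH3 (Real.rpow_nonneg hIq _)
    _ = (∫ x, f x ^ q ∂μ) ^ (1 / q) * (∫ x, g x ^ (-s) ∂μ) ^ (1 / s) *
          V ^ (1 / q' - 1 / s) := by ring

/-- If `0 < α < n`, `1 < p < n/α`, `1/p - 1/q = α/n` and
`λ₁, λ₂ ∈ A_{p,q}`, then `ν = λ₁ λ₂⁻¹` belongs to `A₂`: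
there is `C` with `((1/|Q|)∫_Q ν)((1/|Q|)∫_Q ν⁻¹) ≤ C` for all cubes `Q`
(closed balls for the sup metric on `Fin n → ℝ`). -/
theorem statement6 (n : ℕ) (hn : 0 < n) (α p q : ℝ)
    (hα : 0 < α) (hαn : α < (n : ℝ)) (hp : 1 < p) (hpn : p < (n : ℝ) / α)
    (hpq : 1 / p - 1 / q = α / (n : ℝ))
    (lam₁ lam₂ : (Fin n → ℝ) → ℝ)
    (hm₁ : Measurable lam₁) (hm₂ : Measurable lam₂)
    (hpos₁ : ∀ᵐ x ∂(volume : Measure (Fin n → ℝ)), 0 < lam₁ x)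
    (hpos₂ : ∀ᵐ x ∂(volume : Measure (Fin n → ℝ)), 0 < lam₂ x)
    -- local integrability of the relevant powers (part of membership in `A_{p,q}`)
    (hint : ∀ (c : Fin n → ℝ) (r : ℝ), 0 < r →
      IntegrableOn (fun x => lam₁ x ^ q) (closedBall c r) volume ∧
      IntegrableOn (fun x => lam₁ x ^ (-(p / (p - 1)))) (closedBall c r) volume ∧
      IntegrableOn (fun x => lam₂ x ^ q) (closedBall c r) volume ∧
      IntegrableOn (fun x => lam₂ x ^ (-(p / (p - 1)))) (closedBall c r) volume)
    (A₁ A₂ : ℝ)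
    -- `[λ₁]_{A_{p,q}} ≤ A₁`
    (hA₁ : ∀ (c : Fin n → ℝ) (r : ℝ), 0 < r →
      (((volume (closedBall c r)).toReal)⁻¹ * ∫ x in closedBall c r, lam₁ x ^ q) *
        ((((volume (closedBall c r)).toReal)⁻¹ *
            ∫ x in closedBall c r, lam₁ x ^ (-(p / (p - 1)))) ^ (q / (p / (p - 1)))) ≤ A₁)
    -- `[λ₂]_{A_{p,q}} ≤ A₂`
    (hA₂ : ∀ (c : Fin n → ℝ) (r : ℝ), 0 < r →
      (((volume (closedBall c r)).toReal)⁻¹ * ∫ x in closedBall c r, lam₂ x ^ q) *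
        ((((volume (closedBall c r)).toReal)⁻¹ *
            ∫ x in closedBall c r, lam₂ x ^ (-(p / (p - 1)))) ^ (q / (p / (p - 1)))) ≤ A₂) :
    ∃ C : ℝ, ∀ (c : Fin n → ℝ) (r : ℝ), 0 < r →
      (((volume (closedBall c r)).toReal)⁻¹ * ∫ x in closedBall c r, lam₁ x * (lam₂ x)⁻¹) *
        (((volume (closedBall c r)).toReal)⁻¹ *
          ∫ x in closedBall c r, (lam₁ x * (lam₂ x)⁻¹)⁻¹) ≤ C := by
  -- basic exponent facts
  have hn' : (0:ℝ) < n := by exact_mod_cast hn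
  have hp0 : 0 < p := lt_trans one_pos hp
  have hαp : α / (n:ℝ) < 1 / p := by
    rw [div_lt_div_iff₀ hn' hp0]
    have := (lt_div_iff₀ hα).1 hpn
    nlinarith
  have h1q : 1 / q = 1 / p - α / (n:ℝ) := by linarith
  have h1qpos : 0 < 1 / q := by
    rw [h1q]; linarith
  have hq0 : 0 < q := one_div_pos.1 h1qpos
  have hpltq : p < q := by
    have h2 : 1 / q < 1 / p := by
      rw [h1q]
      have : 0 < α / (n:ℝ) := div_pos hα hn'
      linarith
    exact lt_of_one_div_lt_one_div hq0 h2
  have hq : 1 < q := lt_trans hp hpltq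
  set s : ℝ := p / (p - 1) with hsdef
  have hp1 : 0 < p - 1 := by linarith
  have hs : 1 < s := by
    rw [hsdef, lt_div_iff₀ hp1]; linarith
  have hqs : q / (q - 1) < s := by
    rw [hsdef, div_lt_div_iff₀ (by linarith : (0:ℝ) < q - 1) hp1]
    nlinarith
  refine ⟨A₁ ^ (1 / q) * A₂ ^ (1 / q), ?_⟩
  intro c r hr
  set Q : Set (Fin n → ℝ) := closedBall c r with hQdef
  haveI : IsFiniteMeasure ((volume : Measure (Fin n → ℝ)).restrict Q) :=
    ⟨by rw [Measure.restrict_apply_univ]; exact measure_closedBall_lt_top⟩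
  have hVpos : 0 < (volume Q).toReal :=
    ENNReal.toReal_pos (ne_of_gt (measure_closedBall_pos _ _ hr))
      measure_closedBall_lt_top.ne
  set V : ℝ := (volume Q).toReal with hVdef
  obtain ⟨hi1, hi2, hi3, hi4⟩ := hint c r hr
  have hae₁ : ∀ᵐ x ∂((volume : Measure (Fin n → ℝ)).restrict Q), 0 < lam₁ x :=
    ae_restrict_of_ae hpos₁
  have hae₂ : ∀ᵐ x ∂((volume : Measure (Fin n → ℝ)).restrict Q), 0 < lam₂ x :=
    ae_restrict_of_ae hpos₂
  -- the two Hölder bounds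
  have B₁ := holder_pair ((volume : Measure (Fin n → ℝ)).restrict Q) hm₁ hm₂ hae₁ hae₂
    hq hs hqs hi1 hi4
  have B₂ := holder_pair ((volume : Measure (Fin n → ℝ)).restrict Q) hm₂ hm₁ hae₂ hae₁
    hq hs hqs hi3 hi2
  rw [Measure.restrict_apply_univ] at B₁ B₂
  -- nonnegativity of all integrals
  have hI1q : 0 ≤ ∫ x in Q, lam₁ x ^ q := by
    refine integral_nonneg_of_ae ?_
    filter_upwards [hae₁] with x hx; exact Real.rpow_nonneg hx.le _
  have hI2q : 0 ≤ ∫ x in Q, lam₂ x ^ q := by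
    refine integral_nonneg_of_ae ?_
    filter_upwards [hae₂] with x hx; exact Real.rpow_nonneg hx.le _
  have hI1s : 0 ≤ ∫ x in Q, lam₁ x ^ (-s) := by
    refine integral_nonneg_of_ae ?_
    filter_upwards [hae₁] with x hx; exact Real.rpow_nonneg hx.le _
  have hI2s : 0 ≤ ∫ x in Q, lam₂ x ^ (-s) := by
    refine integral_nonneg_of_ae ?_
    filter_upwards [hae₂] with x hx; exact Real.rpow_nonneg hx.le _
  -- rewrite the second integrand
  have hswap : ∫ x in Q, (lam₁ x * (lam₂ x)⁻¹)⁻¹ = ∫ x in Q, lam₂ x * (lam₁ x)⁻¹ := by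
    refine integral_congr_ae ?_
    filter_upwards [hae₁, hae₂] with x h1 h2
    rw [mul_inv, inv_inv, mul_comm]
  -- averaging lemma
  have hVinv : (0:ℝ) ≤ V⁻¹ := inv_nonneg.2 hVpos.le
  have key : ∀ I J L : ℝ, 0 ≤ I → 0 ≤ J →
      L ≤ I ^ (1/q) * J ^ (1/s) * V ^ (1 / (q / (q - 1)) - 1 / s) →
      V⁻¹ * L ≤ (V⁻¹ * I) ^ (1/q) * (V⁻¹ * J) ^ (1/s) := by
    intro I J L hI hJ hL
    have h := mul_le_mul_of_nonneg_left hL hVinv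
    refine le_trans h (le_of_eq ?_)
    rw [Real.mul_rpow hVinv hI, Real.mul_rpow hVinv hJ,
      Real.inv_rpow hVpos.le, Real.inv_rpow hVpos.le,
      ← Real.rpow_neg hVpos.le, ← Real.rpow_neg hVpos.le]
    have hv : V⁻¹ * V ^ (1 / (q / (q - 1)) - 1 / s) = V ^ (-(1/q)) * V ^ (-(1/s)) := by
      rw [← Real.rpow_neg_one V, ← Real.rpow_add hVpos, ← Real.rpow_add hVpos]
      congr 1
      have hone : 1 / (q / (q - 1)) = 1 - 1 / q := by
        rw [one_div_div, sub_div, div_self (ne_of_gt hq0)]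
      rw [hone]; ring
    calc V⁻¹ * (I ^ (1/q) * J ^ (1/s) * V ^ (1 / (q / (q - 1)) - 1 / s))
        = (V⁻¹ * V ^ (1 / (q / (q - 1)) - 1 / s)) * (I ^ (1/q) * J ^ (1/s)) := by ring
      _ = (V ^ (-(1/q)) * V ^ (-(1/s))) * (I ^ (1/q) * J ^ (1/s)) := by rw [hv]
      _ = V ^ (-(1/q)) * I ^ (1/q) * (V ^ (-(1/s)) * J ^ (1/s)) := by ring
  have hb₁ : V⁻¹ * ∫ x in Q, lam₁ x * (lam₂ x)⁻¹ ≤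
      (V⁻¹ * ∫ x in Q, lam₁ x ^ q) ^ (1/q) * (V⁻¹ * ∫ x in Q, lam₂ x ^ (-s)) ^ (1/s) :=
    key _ _ _ hI1q hI2s B₁
  have hb₂ : V⁻¹ * ∫ x in Q, lam₂ x * (lam₁ x)⁻¹ ≤
      (V⁻¹ * ∫ x in Q, lam₂ x ^ q) ^ (1/q) * (V⁻¹ * ∫ x in Q, lam₁ x ^ (-s)) ^ (1/s) :=
    key _ _ _ hI2q hI1s B₂
  -- combine
  set u₁ : ℝ := V⁻¹ * ∫ x in Q, lam₁ x ^ q with hu₁def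
  set u₂ : ℝ := V⁻¹ * ∫ x in Q, lam₂ x ^ q with hu₂def
  set v₁ : ℝ := V⁻¹ * ∫ x in Q, lam₁ x ^ (-s) with hv₁def
  set v₂ : ℝ := V⁻¹ * ∫ x in Q, lam₂ x ^ (-s) with hv₂def
  have hu₁ : 0 ≤ u₁ := mul_nonneg hVinv hI1q
  have hu₂ : 0 ≤ u₂ := mul_nonneg hVinv hI2q
  have hv₁ : 0 ≤ v₁ := mul_nonneg hVinv hI1s
  have hv₂ : 0 ≤ v₂ := mul_nonneg hVinv hI2s
  have hnn₂ : 0 ≤ V⁻¹ * ∫ x in Q, lam₂ x * (lam₁ x)⁻¹ := by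
    refine mul_nonneg hVinv (integral_nonneg_of_ae ?_)
    filter_upwards [hae₁, hae₂] with x h1 h2
    exact mul_nonneg h2.le (inv_nonneg.2 h1.le)
  have hrhs₁ : 0 ≤ u₁ ^ (1/q) * v₂ ^ (1/s) :=
    mul_nonneg (Real.rpow_nonneg hu₁ _) (Real.rpow_nonneg hv₂ _)
  have e : ∀ u v : ℝ, 0 ≤ u → 0 ≤ v → (u * v ^ (q/s)) ^ (1/q) = u ^ (1/q) * v ^ (1/s) := by
    intro u v hu hv
    rw [Real.mul_rpow hu (Real.rpow_nonneg hv _), ← Real.rpow_mul hv]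
    congr 2
    rw [div_mul_div_comm, mul_one, mul_comm s q, div_mul_cancel_left₀ (ne_of_gt hq0), one_div]
  have hbr₁ : 0 ≤ u₁ * v₁ ^ (q/s) := mul_nonneg hu₁ (Real.rpow_nonneg hv₁ _)
  have hbr₂ : 0 ≤ u₂ * v₂ ^ (q/s) := mul_nonneg hu₂ (Real.rpow_nonneg hv₂ _)
  have hA₁' : u₁ * v₁ ^ (q/s) ≤ A₁ := hA₁ c r hr
  have hA₂' : u₂ * v₂ ^ (q/s) ≤ A₂ := hA₂ c r hr
  have hA₁nn : 0 ≤ A₁ := le_trans hbr₁ hA₁'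
  have hA₂nn : 0 ≤ A₂ := le_trans hbr₂ hA₂'
  rw [hswap]
  calc (V⁻¹ * ∫ x in Q, lam₁ x * (lam₂ x)⁻¹) * (V⁻¹ * ∫ x in Q, lam₂ x * (lam₁ x)⁻¹)
      ≤ (u₁ ^ (1/q) * v₂ ^ (1/s)) * (u₂ ^ (1/q) * v₁ ^ (1/s)) :=
        mul_le_mul hb₁ hb₂ hnn₂ hrhs₁
    _ = (u₁ * v₁ ^ (q/s)) ^ (1/q) * ((u₂ * v₂ ^ (q/s)) ^ (1/q)) := by
        rw [e u₁ v₁ hu₁ hv₁, e u₂ v₂ hu₂ hv₂]; ring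
    _ ≤ A₁ ^ (1/q) * A₂ ^ (1/q) := by
        refine mul_le_mul (Real.rpow_le_rpow hbr₁ hA₁' (le_of_lt h1qpos))
          (Real.rpow_le_rpow hbr₂ hA₂' (le_of_lt h1qpos))
          (Real.rpow_nonneg hbr₂ _) (Real.rpow_nonneg hA₁nn _)
end
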